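/- arXiv:1201.0527 — 6 statements merged into one kernel-verified Lean document; each statement's English description precedes it below -/
import Mathlib

section
/- For every real or complex number x with |x| < 1 and all real numbers θ, φ, r, the series ∑_{n=0}^∞ xⁿ sin(nθ) sin((n+r)φ) converges and equals (1/2)·(cos(rφ) − x·cos(θ+(r−1)φ))/(1 − 2x·cos(θ−φ) + x²) − (1/2)·(cos(rφ) − x·cos(θ−(r−1)φ))/(1 − 2x·cos(θ+φ) + x²). -/
/-!
By product-to-sum, `sin nθ · sin (n+r)φ` is half the difference of `cos (n(θ-φ) - rφ)` and
`cos (n(θ+φ) + rφ)`. Writing `cos (nα + β)` through `e^{±i(nα+β)}` splits `∑ xⁿ cos (nα + β)`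
into two geometric series with ratios `x e^{±iα}`, of modulus `|x| < 1`; their sums share the
denominator `(1 - x e^{iα})(1 - x e^{-iα}) = 1 - 2x cos α + x²`.
-/

open Real Complex

lemma one_sub_ne_zero_of_norm_lt_one {R : Type*} [SeminormedRing R] [NormOneClass R] {z : R}
    (hz : ‖z‖ < 1) : 1 - z ≠ 0 := by
  rintro h
  rw [← eq_of_sub_eq_zero h, norm_one] at hz
  exact lt_irrefl 1 hz

lemma hasSum_pow_mul_unit_circle {x u : ℂ} (hx : ‖x‖ < 1) (hu : ‖u‖ = 1) (v : ℂ) :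
    HasSum (fun n : ℕ => x ^ n * ((v * u ^ n + (v * u ^ n)⁻¹) / 2))
      (((v + v⁻¹) / 2 - x * ((v * u⁻¹ + (v * u⁻¹)⁻¹) / 2)) /
        (1 - 2 * x * ((u + u⁻¹) / 2) + x ^ 2)) := by
  have hu0 : u ≠ 0 := norm_ne_zero_iff.1 (by rw [hu]; exact one_ne_zero)
  have hxu : ‖x * u‖ < 1 := by rwa [norm_mul, hu, mul_one]
  have hxu' : ‖x * u⁻¹‖ < 1 := by rwa [norm_mul, norm_inv, hu, inv_one, mul_one]
  have hsum := ((hasSum_geometric_of_norm_lt_one hxu).mul_left (v / 2)).add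
    ((hasSum_geometric_of_norm_lt_one hxu').mul_left (v⁻¹ / 2))
  have hterm : (fun n : ℕ => x ^ n * ((v * u ^ n + (v * u ^ n)⁻¹) / 2)) =
      fun n => v / 2 * (x * u) ^ n + v⁻¹ / 2 * (x * u⁻¹) ^ n := by
    funext n
    rw [mul_inv, ← inv_pow]
    ring
  have hval : ((v + v⁻¹) / 2 - x * ((v * u⁻¹ + (v * u⁻¹)⁻¹) / 2)) /
      (1 - 2 * x * ((u + u⁻¹) / 2) + x ^ 2) =
        v / 2 * (1 - x * u)⁻¹ + v⁻¹ / 2 * (1 - x * u⁻¹)⁻¹ := by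
    have hxu0 := one_sub_ne_zero_of_norm_lt_one hxu
    have hxu0' := one_sub_ne_zero_of_norm_lt_one hxu'
    have hux : u - x ≠ 0 := by
      rw [show u - x = u * (1 - x * u⁻¹) by field_simp]
      exact mul_ne_zero hu0 hxu0'
    have hden : 1 - 2 * x * ((u + u⁻¹) / 2) + x ^ 2 = (1 - x * u) * (1 - x * u⁻¹) := by
      field_simp
      ring
    rw [hden, mul_inv, inv_inv]
    field_simp
    ring
  rw [hterm, hval]
  exact hsum

lemma ofReal_cos_eq_exp (γ : ℝ) :
    (Real.cos γ : ℂ) = (Complex.exp (γ * I) + (Complex.exp (γ * I))⁻¹) / 2 := by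
  rw [ofReal_cos, Complex.cos, ← Complex.exp_neg, neg_mul]

theorem hasSum_pow_mul_cos {x : ℂ} (hx : ‖x‖ < 1) (α β : ℝ) :
    HasSum (fun n : ℕ => x ^ n * (Real.cos (n * α + β) : ℂ))
      (((Real.cos β : ℂ) - x * Real.cos (β - α)) / (1 - 2 * x * Real.cos α + x ^ 2)) := by
  have hexp : ∀ n : ℕ, Complex.exp (((n * α + β : ℝ) : ℂ) * I) =
      Complex.exp (β * I) * Complex.exp (α * I) ^ n := by
    intro n
    rw [← Complex.exp_nat_mul, ← Complex.exp_add]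
    push_cast
    ring_nf
  have hexp' : Complex.exp (((β - α : ℝ) : ℂ) * I) =
      Complex.exp (β * I) * (Complex.exp (α * I))⁻¹ := by
    rw [← Complex.exp_neg, ← Complex.exp_add]
    push_cast
    ring_nf
  simp only [ofReal_cos_eq_exp, hexp, hexp']
  exact hasSum_pow_mul_unit_circle hx (norm_exp_ofReal_mul_I α) _

lemma Real.sin_mul_sin_eq_half_sub (a b : ℝ) :
    Real.sin a * Real.sin b = (Real.cos (a - b) - Real.cos (a + b)) / 2 := by
  rw [Real.cos_sub, Real.cos_add]
  ring

/-- Lemma 3.1: for `|x| < 1` and real `θ, φ, r`, the series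
`∑ xⁿ sin nθ sin (n+r)φ` converges to the stated closed form. -/
theorem stmt_0 (x : ℂ) (hx : ‖x‖ < 1) (θ φ r : ℝ) :
    HasSum (fun n : ℕ => x ^ n * (Real.sin (n * θ) : ℂ) * (Real.sin ((n + r) * φ) : ℂ))
      ((1 / 2) * (((Real.cos (r * φ) : ℂ) - x * (Real.cos (θ + (r - 1) * φ) : ℂ)) /
          (1 - 2 * x * (Real.cos (θ - φ) : ℂ) + x ^ 2))
        - (1 / 2) * (((Real.cos (r * φ) : ℂ) - x * (Real.cos (θ - (r - 1) * φ) : ℂ)) /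
          (1 - 2 * x * (Real.cos (θ + φ) : ℂ) + x ^ 2))) := by
  have hsum := ((hasSum_pow_mul_cos hx (θ - φ) (-(r * φ))).mul_left (1 / 2)).sub
    ((hasSum_pow_mul_cos hx (θ + φ) (r * φ)).mul_left (1 / 2))
  rw [Real.cos_neg, show -(r * φ) - (θ - φ) = -(θ + (r - 1) * φ) by ring,
    show r * φ - (θ + φ) = -(θ - (r - 1) * φ) by ring, Real.cos_neg, Real.cos_neg] at hsum
  have hterm : ∀ n : ℕ, x ^ n * (Real.sin (n * θ) : ℂ) * (Real.sin ((n + r) * φ) : ℂ) =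
      1 / 2 * (x ^ n * Real.cos (n * (θ - φ) + -(r * φ))) -
        1 / 2 * (x ^ n * Real.cos (n * (θ + φ) + r * φ)) := by
    intro n
    rw [mul_assoc, ← ofReal_mul, Real.sin_mul_sin_eq_half_sub,
      show n * θ - (n + r) * φ = n * (θ - φ) + -(r * φ) by ring,
      show n * θ + (n + r) * φ = n * (θ + φ) + r * φ by ring]
    push_cast
    ring
  simp only [hterm]
  exact hsum
end

section
/- If f : ℝⁿ → ℝ is real analytic on a connected open set U ⊆ ℝⁿ and f is not identically zero on U, then the zero set {x ∈ U : f(x) = 0} has Lebesgue measure zero. -/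
/-!
By the identity theorem the germ of `f` is nonzero at every point `a` of `U`, so some
directional derivative `D^k f (a) (v, …, v)` is nonzero, and by continuity it stays nonzero on
a closed neighbourhood `V` of `a`. The restriction of `f` to any line `x + ℝ v` is then analytic
and not locally zero at the points of `V`, so its zeros in `V` are isolated, hence countable.
Fubini in the direction `v` makes `{y ∈ V | f y = 0}` null, and countably many such
neighbourhoods cover the zero set.
-/

open MeasureTheory Filter Set Topology
open scoped ENNReal

section Lines

variable {𝕜 E F : Type*} [NontriviallyNormedField 𝕜] [NormedAddCommGroup E]
  [NormedSpace 𝕜 E] [NormedAddCommGroup F] [NormedSpace 𝕜 F]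

theorem iteratedDeriv_comp_add_smul {f : E → F} {U : Set E} {n : WithTop ℕ∞} (hU : IsOpen U)
    (hf : ContDiffOn 𝕜 n f U) (x v : E) {k : ℕ} (hk : k ≤ n) {t : 𝕜}
    (ht : x + t • v ∈ U) :
    iteratedDeriv k (fun s => f (x + s • v)) t =
      iteratedFDeriv 𝕜 k f (x + t • v) (fun _ => v) := by
  induction k generalizing t with
  | zero => simp
  | succ k ih =>
    have hline : HasDerivAt (fun s : 𝕜 => x + s • v) v t := by
      simpa using ((hasDerivAt_id t).smul_const v).const_add x
    have hih : iteratedDeriv k (fun s => f (x + s • v)) =ᶠ[𝓝 t]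
        fun s => iteratedFDeriv 𝕜 k f (x + s • v) (fun _ => v) :=
      eventuallyEq_of_mem (hline.continuousAt.preimage_mem_nhds (hU.mem_nhds ht))
        fun s hs => ih (le_trans (by simp) hk) hs
    have hDk : HasFDerivAt (iteratedFDeriv 𝕜 k f)
        (fderiv 𝕜 (iteratedFDeriv 𝕜 k f) (x + t • v)) (x + t • v) :=
      ((hf.contDiffAt (hU.mem_nhds ht)).differentiableAt_iteratedFDeriv
        (lt_of_lt_of_le (by exact_mod_cast k.lt_succ_self) hk)).hasFDerivAt
    have hDk_line : HasDerivAt (fun s => iteratedFDeriv 𝕜 k f (x + s • v) (fun _ => v))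
        (fderiv 𝕜 (iteratedFDeriv 𝕜 k f) (x + t • v) v (fun _ => v)) t :=
      (ContinuousMultilinearMap.apply 𝕜 (fun _ : Fin k => E) F
        (fun _ => v)).hasFDerivAt.comp_hasDerivAt t (hDk.comp_hasDerivAt t hline)
    rw [iteratedDeriv_succ, hih.deriv_eq, hDk_line.deriv, iteratedFDeriv_succ_apply_left]
    rfl

theorem AnalyticAt.eventuallyEq_zero_of_iteratedFDeriv_diag_eq_zero [CharZero 𝕜]
    [CompleteSpace F] {f : E → F} {a : E} (hf : AnalyticAt 𝕜 f a)
    (h : ∀ (k : ℕ) (v : E), iteratedFDeriv 𝕜 k f a (fun _ => v) = 0) : f =ᶠ[𝓝 a] 0 := by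
  obtain ⟨p, r, hp⟩ := hf
  filter_upwards [Metric.eball_mem_nhds a hp.r_pos] with y hy
  have hsum := hp.hasSum_iteratedFDeriv (y := y - a) (by simpa [edist_eq_enorm_sub] using hy)
  simp only [h, smul_zero, add_sub_cancel] at hsum
  exact hsum.unique hasSum_zero

theorem AnalyticAt.eventually_ne_zero_comp_add_smul [CompleteSpace F] {f : E → F} {x v : E}
    {t : 𝕜} (hf : AnalyticAt 𝕜 f (x + t • v)) {k : ℕ}
    (hk : iteratedFDeriv 𝕜 k f (x + t • v) (fun _ => v) ≠ 0) :
    ∀ᶠ s in 𝓝[≠] t, f (x + s • v) ≠ 0 := by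
  have hline : AnalyticAt 𝕜 (fun s : 𝕜 => x + s • v) t := by fun_prop
  refine ((hf.comp_of_eq hline rfl).eventually_eq_zero_or_eventually_ne_zero).resolve_left
    fun hzero => hk ?_
  have hW : AnalyticOnNhd 𝕜 f {y | AnalyticAt 𝕜 f y} := fun _ hy => hy
  rw [← iteratedDeriv_comp_add_smul (isOpen_analyticAt 𝕜 f)
    (hW.contDiffOn (n := ⊤) (isOpen_analyticAt 𝕜 f).uniqueDiffOn) x v le_top hf,
    EventuallyEq.iteratedDeriv_eq k (f := fun s => f (x + s • v)) (g := 0) hzero]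
  simp

theorem countable_setOf_add_smul_mem_zeroSet [CompleteSpace F] [SecondCountableTopology 𝕜]
    {f : E → F} {V : Set E} (hf : AnalyticOnNhd 𝕜 f V) {k : ℕ} {v : E}
    (hk : ∀ y ∈ V, iteratedFDeriv 𝕜 k f y (fun _ => v) ≠ 0) (x : E) :
    {t : 𝕜 | x + t • v ∈ {y ∈ V | f y = 0}}.Countable := by
  refine (HereditarilyLindelofSpace.isLindelof _).countable_of_isDiscrete
    (isDiscrete_iff_nhdsNE.2 fun t ⟨htV, _⟩ => ?_)
  rw [← disjoint_iff, disjoint_principal_right]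
  filter_upwards [(hf _ htV).eventually_ne_zero_comp_add_smul (hk _ htV)] with s hs hmem
  exact hs hmem.2

end Lines

section Slicing

variable {E : Type*} [NormedAddCommGroup E] [NormedSpace ℝ E] [MeasurableSpace E] [BorelSpace E]
  [SecondCountableTopology E]

theorem measure_eq_zero_of_forall_volume_add_smul_mem_eq_zero {μ : Measure E} [SFinite μ]
    [μ.IsAddRightInvariant] {A : Set E} (hA : MeasurableSet A) (v : E)
    (h : ∀ x, volume {t : ℝ | x + t • v ∈ A} = 0) : μ A = 0 := by
  set B : Set (ℝ × E) := (fun p => p.2 + p.1 • v) ⁻¹' A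
  have hB : MeasurableSet B :=
    (by fun_prop : Continuous fun p : ℝ × E => p.2 + p.1 • v).measurable hA
  have hprod : (volume.prod μ) B = μ A * ∞ := by
    simp [Measure.prod_apply hB, B, preimage_preimage, measure_preimage_add_right]
  have hprod_symm : (volume.prod μ) B = 0 := by
    rw [Measure.prod_apply_symm hB]
    exact (lintegral_congr h).trans lintegral_zero
  simpa using hprod.symm.trans hprod_symm

end Slicing

section ZeroSet

variable {E F : Type*} [NormedAddCommGroup E] [NormedSpace ℝ E] [MeasurableSpace E] [BorelSpace E]
  [SecondCountableTopology E] [NormedAddCommGroup F] [NormedSpace ℝ F] [CompleteSpace F]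
  (μ : Measure E) [SFinite μ] [μ.IsAddRightInvariant] {f : E → F}

theorem AnalyticAt.exists_mem_nhds_measure_zeroSet_eq_zero {a : E} (hf : AnalyticAt ℝ f a)
    (hnz : ¬ f =ᶠ[𝓝 a] 0) : ∃ V ∈ 𝓝 a, μ {x ∈ V | f x = 0} = 0 := by
  obtain ⟨k, v, hk⟩ : ∃ (k : ℕ) (v : E), iteratedFDeriv ℝ k f a (fun _ => v) ≠ 0 := by
    by_contra! h
    exact hnz (hf.eventuallyEq_zero_of_iteratedFDeriv_diag_eq_zero h)
  have hcont : ContinuousAt (fun y => iteratedFDeriv ℝ k f y (fun _ => v)) a :=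
    (ContinuousMultilinearMap.apply ℝ (fun _ : Fin k => E) F
      (fun _ => v)).continuous.continuousAt.comp (hf.contDiffAt.continuousAt_iteratedFDeriv le_top)
  obtain ⟨V, hVa, hVclosed, hV⟩ :=
    exists_mem_nhds_isClosed_subset (hf.eventually_analyticAt.and (hcont.eventually_ne hk))
  have hfV : AnalyticOnNhd ℝ f V := fun y hy => (hV hy).1
  refine ⟨V, hVa, measure_eq_zero_of_forall_volume_add_smul_mem_eq_zero
    (hfV.continuousOn.preimage_isClosed_of_isClosed hVclosed isClosed_singleton).measurableSet v
    fun x => (countable_setOf_add_smul_mem_zeroSet hfV (fun y hy => (hV hy).2) x).measure_zero _⟩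

theorem AnalyticOnNhd.measure_zeroSet_eq_zero {U : Set E} (hf : AnalyticOnNhd ℝ f U)
    (hU : IsPreconnected U) (hne : ∃ x ∈ U, f x ≠ 0) : μ {x ∈ U | f x = 0} = 0 := by
  obtain ⟨x₀, hx₀U, hx₀⟩ := hne
  refine measure_null_of_locally_null _ fun a ⟨haU, _⟩ => ?_
  have hnz : ¬ f =ᶠ[𝓝 a] 0 := fun hzero =>
    hx₀ (hf.eqOn_zero_of_preconnected_of_eventuallyEq_zero hU haU hzero hx₀U)
  obtain ⟨V, hVa, hV⟩ := (hf a haU).exists_mem_nhds_measure_zeroSet_eq_zero μ hnz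
  exact ⟨{x ∈ V | f x = 0},
    mem_of_superset (inter_mem_nhdsWithin _ hVa) fun x ⟨hxU, hxV⟩ => ⟨hxV, hxU.2⟩, hV⟩

end ZeroSet

theorem stmt_2_general (n : ℕ) (U : Set (EuclideanSpace ℝ (Fin n)))
    (hUc : IsConnected U)
    (f : EuclideanSpace ℝ (Fin n) → ℝ) (hf : AnalyticOnNhd ℝ f U)
    (hne : ∃ x ∈ U, f x ≠ 0) :
    volume {x ∈ U | f x = 0} = 0 :=
  hf.measure_zeroSet_eq_zero volume hUc.isPreconnected hne

/-- The zero set of a real analytic function, not identically zero, on a connected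
open subset of `ℝⁿ` has Lebesgue measure zero. -/
theorem stmt_2 (n : ℕ) (U : Set (EuclideanSpace ℝ (Fin n)))
    (hU : IsOpen U) (hUc : IsConnected U)
    (f : EuclideanSpace ℝ (Fin n) → ℝ) (hf : AnalyticOnNhd ℝ f U)
    (hne : ∃ x ∈ U, f x ≠ 0) :
    volume {x ∈ U | f x = 0} = 0 :=
  stmt_2_general n U hUc f hf hne
end

section
/- For each n ≥ 0 there exists a polynomial p_n ∈ ℂ[X] of degree n such that χ_n = p_n(χ₁) in the group algebra ℂ[F_N], where χ_n = ∑_{|w|=n} w. -/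
/-!
Multiply the sphere sum `χₙ` on the left by `χ₁ = ∑ s` over the `d = 2N` letters `s`. A word
`w` arises as `s · v` with `|v| = n` either when `s` is the first letter of `w` and `|w| = n + 1`
(one way) or when `s` is not and `|w| = n - 1` (`d - 1` ways if `w ≠ 1`, `d` ways if `w = 1`).
Hence `χ₁² = χ₂ + d` and `χ₁ χₙ₊₂ = χₙ₊₃ + (d - 1) χₙ₊₁`, so `χₙ` is a monic polynomial of
degree `n` in `χ₁`.
-/

open Polynomial

namespace FreeGroup

variable {α : Type*} [DecidableEq α]

theorem toWord_mk_singleton (p : α × Bool) : (mk [p]).toWord = [p] := by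
  rw [toWord_mk, reduce_singleton]

theorem toWord_eq_singleton_iff {p : α × Bool} {w : FreeGroup α} :
    w.toWord = [p] ↔ w = mk [p] :=
  ⟨fun h => by rw [← mk_toWord (x := w), h], fun h => h ▸ toWord_mk_singleton p⟩

theorem length_toWord_mk_singleton_inv_mul (p : α × Bool) (w : FreeGroup α) :
    ((mk [p])⁻¹ * w).toWord.length =
      if w.toWord.head? = some p then w.toWord.length - 1 else w.toWord.length + 1 := by
  rw [toWord_mul, toWord_inv, toWord_mk_singleton, invRev, List.map_singleton,
    List.reverse_singleton, List.singleton_append, reduce.cons, reduce_toWord]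
  obtain ⟨a, b⟩ := p
  cases w.toWord with
  | nil => simp
  | cons q t =>
    obtain ⟨c, e⟩ := q
    by_cases hac : a = c
    · subst hac; cases b <;> cases e <;> simp
    · simp [hac, Ne.symm hac]

end FreeGroup

section Sphere

open FreeGroup

variable {R : Type*} [CommRing R] {α : Type*} [DecidableEq α]
  {chi : ℕ → MonoidAlgebra R (FreeGroup α)}

theorem Fintype.sum_ite_eq_add {β : Type*} [Fintype β] [DecidableEq β] (a : β) (A B : R) :
    ∑ b : β, (if a = b then A else B) = A + (Fintype.card β - 1 : R) * B := by
  have split (b : β) : (if a = b then A else B) = B + if a = b then A - B else 0 := by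
    split_ifs <;> ring
  simp only [split, Finset.sum_add_distrib, Finset.sum_ite_eq, Finset.mem_univ, if_true,
    Finset.sum_const, Finset.card_univ, nsmul_eq_mul]
  ring

theorem sphere_zero_eq_one
    (hchi : ∀ n w, (chi n).coeff w = if w.toWord.length = n then 1 else 0) : chi 0 = 1 := by
  ext w
  simp only [hchi, MonoidAlgebra.one_def, MonoidAlgebra.coeff_single, Finsupp.single_apply,
    List.length_eq_zero_iff, toWord_eq_nil_iff, @eq_comm _ (1 : FreeGroup α)]

variable [Fintype α]

theorem sphere_one_eq_sum
    (hchi : ∀ n w, (chi n).coeff w = if w.toWord.length = n then 1 else 0) :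
    chi 1 = ∑ p : α × Bool, MonoidAlgebra.single (mk [p]) 1 := by
  ext w
  simp only [hchi, MonoidAlgebra.coeff_sum, MonoidAlgebra.coeff_single, Finsupp.finsetSum_apply,
    Finsupp.single_apply, @eq_comm _ (mk _) w, ← toWord_eq_singleton_iff]
  cases w.toWord with
  | nil => simp
  | cons a t => cases t <;> simp

theorem coeff_sphere_one_mul
    (hchi : ∀ n w, (chi n).coeff w = if w.toWord.length = n then 1 else 0) (n : ℕ)
    (w : FreeGroup α) :
    (chi 1 * chi n).coeff w = ∑ p : α × Bool, if w.toWord.head? = some p then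
      (if w.toWord.length - 1 = n then 1 else 0) else (if w.toWord.length + 1 = n then 1 else 0) := by
  simp only [sphere_one_eq_sum hchi, Finset.sum_mul, MonoidAlgebra.coeff_sum,
    Finsupp.finsetSum_apply, MonoidAlgebra.coeff_single_mul_apply, one_mul, hchi,
    length_toWord_mk_singleton_inv_mul]
  exact Finset.sum_congr rfl fun p _ => apply_ite (fun k => if k = n then (1 : R) else 0) _ _ _

theorem sphere_one_mul_sphere_one
    (hchi : ∀ n w, (chi n).coeff w = if w.toWord.length = n then 1 else 0) :
    chi 1 * chi 1 = chi 2 + (Fintype.card (α × Bool) : R) • chi 0 := by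
  ext w
  rw [coeff_sphere_one_mul hchi, MonoidAlgebra.coeff_add, MonoidAlgebra.coeff_smul,
    Finsupp.add_apply, Finsupp.smul_apply, hchi, hchi, smul_eq_mul]
  cases w.toWord with
  | nil => simp
  | cons a t => simp

theorem sphere_one_mul_sphere_add_two
    (hchi : ∀ n w, (chi n).coeff w = if w.toWord.length = n then 1 else 0) (n : ℕ) :
    chi 1 * chi (n + 2) = chi (n + 3) + (Fintype.card (α × Bool) - 1 : R) • chi (n + 1) := by
  ext w
  rw [coeff_sphere_one_mul hchi, MonoidAlgebra.coeff_add, MonoidAlgebra.coeff_smul,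
    Finsupp.add_apply, Finsupp.smul_apply, hchi, hchi, smul_eq_mul]
  cases w.toWord with
  | nil => simp
  | cons a t => simp [Fintype.sum_ite_eq_add]

end Sphere

section SpherePoly

variable {R : Type*} [CommRing R]

noncomputable def spherePoly (d : R) : ℕ → R[X]
  | 0 => 1
  | 1 => X
  | 2 => X ^ 2 - C d
  | n + 3 => X * spherePoly d (n + 2) - C (d - 1) * spherePoly d (n + 1)

theorem spherePoly_monic_natDegree_eq [Nontrivial R] (d : R) :
    ∀ n, (spherePoly d n).Monic ∧ (spherePoly d n).natDegree = n
  | 0 => ⟨monic_one, natDegree_one⟩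
  | 1 => ⟨monic_X, natDegree_X⟩
  | 2 => ⟨monic_X_pow_sub_C d two_ne_zero, natDegree_X_pow_sub_C⟩
  | n + 3 => by
    obtain ⟨hmonic₂, hdeg₂⟩ := spherePoly_monic_natDegree_eq d (n + 2)
    have hdeg₁ := (spherePoly_monic_natDegree_eq d (n + 1)).2
    have hmonic : (X * spherePoly d (n + 2)).Monic := monic_X.mul hmonic₂
    have hdeg : (X * spherePoly d (n + 2)).natDegree = n + 3 := by
      rw [monic_X.natDegree_mul hmonic₂, natDegree_X, hdeg₂]; ring
    have hlt : (C (d - 1) * spherePoly d (n + 1)).natDegree < (X * spherePoly d (n + 2)).natDegree :=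
      (natDegree_C_mul_le _ _).trans_lt (by omega)
    exact ⟨hmonic.sub_of_left (degree_lt_degree hlt),
      (natDegree_sub_eq_left_of_natDegree_lt hlt).trans hdeg⟩

theorem aeval_spherePoly {α : Type*} [Fintype α] [DecidableEq α]
    {chi : ℕ → MonoidAlgebra R (FreeGroup α)}
    (hchi : ∀ n w, (chi n).coeff w = if w.toWord.length = n then 1 else 0) :
    ∀ n, aeval (chi 1) (spherePoly (Fintype.card (α × Bool) : R) n) = chi n
  | 0 => by rw [spherePoly, map_one, sphere_zero_eq_one hchi]
  | 1 => aeval_X _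
  | 2 => by
    rw [spherePoly, map_sub, map_pow, aeval_X, aeval_C, Algebra.algebraMap_eq_smul_one,
      ← sphere_zero_eq_one hchi, sq, sphere_one_mul_sphere_one hchi, add_sub_cancel_right]
  | n + 3 => by
    rw [spherePoly, map_sub, map_mul, map_mul, aeval_X, aeval_C, aeval_spherePoly hchi (n + 2),
      aeval_spherePoly hchi (n + 1), ← Algebra.smul_def, sphere_one_mul_sphere_add_two hchi,
      add_sub_cancel_right]

end SpherePoly

theorem stmt_8_general (N : ℕ)
    (chi : ℕ → MonoidAlgebra ℂ (FreeGroup (Fin N)))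
    (hchi : ∀ n, ∀ w : FreeGroup (Fin N),
      (chi n).coeff w = if (FreeGroup.toWord w).length = n then 1 else 0)
    (n : ℕ) :
    ∃ p : Polynomial ℂ, p.natDegree = n ∧ Polynomial.aeval (chi 1) p = chi n :=
  ⟨spherePoly (Fintype.card (Fin N × Bool) : ℂ) n, (spherePoly_monic_natDegree_eq _ n).2,
    aeval_spherePoly hchi n⟩

/-- Each `χ_n` is a polynomial of degree `n` in `χ₁` in the group algebra `ℂ[F_N]`. -/
theorem stmt_8 (N : ℕ) (hN : 2 ≤ N)
    (chi : ℕ → MonoidAlgebra ℂ (FreeGroup (Fin N)))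
    (hchi : ∀ n, ∀ w : FreeGroup (Fin N),
      (chi n).coeff w = if (FreeGroup.toWord w).length = n then 1 else 0)
    (n : ℕ) :
    ∃ p : Polynomial ℂ, p.natDegree = n ∧ Polynomial.aeval (chi 1) p = chi n :=
  stmt_8_general N chi hchi n
end

section
/- Define polynomials p_n ∈ ℝ[X] by p₀ = 1, p₁ = X, p₂ = X² − 2N, and p_{n+1} = X·p_n − (2N−1)·p_{n−1} for n ≥ 2 (N ≥ 2 fixed). Then for θ ∈ (0, π) and t = 2√(2N−1)·cos θ, one has p_n(t)/(2N−1)^{n/2} = (2 cos θ sin(nθ))/sin θ − (2N/(2N−1))·(sin((n−1)θ))/sin θ for all n ≥ 1. -/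
open Polynomial Real

/-!
Both sides of the formula, read as sequences in `n`, solve `uₙ₊₂ = 2 cos θ · uₙ₊₁ - uₙ`: the
left side because `t = 2√(2N-1) cos θ` turns the recurrence of `pₙ` into this one after dividing by
`√(2N-1)ⁿ⁺²`, the right side because `sin (n θ)` satisfies it. Second-order recurrences are
determined by two initial values, and the two sides agree for `n = 1, 2`.
-/

theorem eq_of_two_step_recurrence {α : Type*} (f : α → α → α) {u v : ℕ → α}
    (hu : ∀ n, u (n + 2) = f (u (n + 1)) (u n)) (hv : ∀ n, v (n + 2) = f (v (n + 1)) (v n))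
    (h0 : u 0 = v 0) (h1 : u 1 = v 1) : u = v := by
  funext n
  induction n using Nat.twoStepInduction with
  | zero => exact h0
  | one => exact h1
  | more n ih0 ih1 => rw [hu, hv, ih0, ih1]

theorem eval_div_pow_add_three {K : Type*} [Field K] {p : ℕ → K[X]} {s : K} (hs : s ≠ 0)
    (hrec : ∀ n, 2 ≤ n → p (n + 1) = X * p n - C (s ^ 2) * p (n - 1)) (c : K) (n : ℕ) :
    (p (n + 3)).eval (2 * s * c) / s ^ (n + 3) =
      2 * c * ((p (n + 2)).eval (2 * s * c) / s ^ (n + 2))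
        - (p (n + 1)).eval (2 * s * c) / s ^ (n + 1) := by
  rw [hrec (n + 2) (by omega), show n + 2 - 1 = n + 1 by omega]
  simp only [eval_sub, eval_mul, eval_X, eval_C]
  field_simp
  ring

theorem sin_add_two_mul (x θ : ℝ) :
    sin ((x + 2) * θ) = 2 * cos θ * sin ((x + 1) * θ) - sin (x * θ) := by
  rw [show (x + 2) * θ = (x + 1) * θ + θ by ring, show x * θ = (x + 1) * θ - θ by ring,
    sin_add, sin_sub]
  ring

noncomputable def cohenTrig (k θ x : ℝ) : ℝ :=
  2 * cos θ * sin (x * θ) / sin θ - k * sin ((x - 1) * θ) / sin θ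

theorem cohenTrig_add_two (k θ x : ℝ) :
    cohenTrig k θ (x + 2) = 2 * cos θ * cohenTrig k θ (x + 1) - cohenTrig k θ x := by
  have h := sin_add_two_mul (x - 1) θ
  rw [show x - 1 + 2 = x + 1 by ring, show x - 1 + 1 = x by ring] at h
  simp only [cohenTrig]
  rw [show x + 2 - 1 = x + 1 by ring, show x + 1 - 1 = x by ring, sin_add_two_mul, h]
  ring

theorem cohenTrig_one (k : ℝ) {θ : ℝ} (hθ : sin θ ≠ 0) : cohenTrig k θ 1 = 2 * cos θ := by
  simp only [cohenTrig, one_mul, sub_self, zero_mul, sin_zero, mul_zero, zero_div, sub_zero]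
  field_simp

theorem cohenTrig_two (k : ℝ) {θ : ℝ} (hθ : sin θ ≠ 0) :
    cohenTrig k θ 2 = 4 * cos θ ^ 2 - k := by
  simp only [cohenTrig]
  rw [show (2 - 1) * θ = θ by ring, two_mul θ, sin_add]
  field_simp
  ring

theorem stmt_9_general (N : ℕ) (hN : 2 ≤ N) (p : ℕ → Polynomial ℝ)
    (hp1 : p 1 = Polynomial.X)
    (hp2 : p 2 = Polynomial.X ^ 2 - Polynomial.C (2 * (N:ℝ)))
    (hrec : ∀ n, 2 ≤ n → p (n + 1) = Polynomial.X * p n - Polynomial.C (2 * (N:ℝ) - 1) * p (n - 1))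
    (θ : ℝ) (hθ : θ ∈ Set.Ioo 0 Real.pi) (t : ℝ) (ht : t = 2 * Real.sqrt (2 * N - 1) * Real.cos θ)
    (n : ℕ) (hn : 1 ≤ n) :
    (p n).eval t / (Real.sqrt (2 * N - 1)) ^ n =
      2 * Real.cos θ * Real.sin (n * θ) / Real.sin θ
        - (2 * N / (2 * N - 1)) * Real.sin (((n : ℝ) - 1) * θ) / Real.sin θ := by
  have hb : (0 : ℝ) < 2 * N - 1 := by
    have : (2 : ℝ) ≤ N := by exact_mod_cast hN
    linarith
  set s := √(2 * N - 1 : ℝ)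
  have hs : s ≠ 0 := (sqrt_pos.2 hb).ne'
  have hs2 : s ^ 2 = 2 * N - 1 := sq_sqrt hb.le
  have hsin : sin θ ≠ 0 := (sin_pos_of_pos_of_lt_pi hθ.1 hθ.2).ne'
  have key := eq_of_two_step_recurrence (fun a b => 2 * cos θ * a - b)
    (u := fun m => (p (m + 1)).eval t / s ^ (m + 1))
    (v := fun m => cohenTrig (2 * N / (2 * N - 1)) θ (m + 1))
    (ht ▸ eval_div_pow_add_three hs (hs2 ▸ hrec) (cos θ))
    (fun m => by convert cohenTrig_add_two _ θ (m + 1) using 2 <;> push_cast <;> ring) ?_ ?_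
  · obtain ⟨m, rfl⟩ : ∃ m, n = m + 1 := ⟨n - 1, by omega⟩
    have := congrFun key m
    push_cast
    exact this
  · rw [hp1, eval_X, ht, show ((0 : ℕ) : ℝ) + 1 = 1 by norm_num, cohenTrig_one _ hsin,
      zero_add, pow_one]
    field_simp
  · rw [hp2, show ((1 : ℕ) : ℝ) + 1 = 2 by norm_num, cohenTrig_two _ hsin]
    simp only [eval_sub, eval_pow, eval_X, eval_C, ht]
    field_simp
    rw [hs2]
    ring

/-- Cohen's trigonometric formula for the polynomials encoding the characters `χ_n`. -/
theorem stmt_9 (N : ℕ) (hN : 2 ≤ N) (p : ℕ → Polynomial ℝ)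
    (hp0 : p 0 = 1) (hp1 : p 1 = Polynomial.X)
    (hp2 : p 2 = Polynomial.X ^ 2 - Polynomial.C (2 * (N:ℝ)))
    (hrec : ∀ n, 2 ≤ n → p (n + 1) = Polynomial.X * p n - Polynomial.C (2 * (N:ℝ) - 1) * p (n - 1))
    (θ : ℝ) (hθ : θ ∈ Set.Ioo 0 Real.pi) (t : ℝ) (ht : t = 2 * Real.sqrt (2 * N - 1) * Real.cos θ)
    (n : ℕ) (hn : 1 ≤ n) :
    (p n).eval t / (Real.sqrt (2 * N - 1)) ^ n =
      2 * Real.cos θ * Real.sin (n * θ) / Real.sin θ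
        - (2 * N / (2 * N - 1)) * Real.sin (((n : ℝ) - 1) * θ) / Real.sin θ :=
  stmt_9_general N hN p hp1 hp2 hrec θ hθ t ht n hn
end

section
/- Let F_N be the free group on N ≥ 2 generators and let q_l denote the orthogonal projection of ℓ²(F_N) onto the span of words of length l. For β = ∑_{|w|=1} c_w w with c_w = ε c_{w^{−1}} (ε ∈ {±1}) orthogonal to the subspace S₁ spanned by χ₁, and with β_{r,s} := q_{r+s+1}(χ_r β χ_s) for r, s ≥ 0 (and 0 otherwise), one has for all n, m, n′, m′ ≥ 0: ⟨β_{n,m}, β′_{n′,m′}⟩ = δ_{ε,ε′} δ_{n+m, n′+m′} (2N−1)^{n+m} (−ε(2N−1))^{−|n−n′|} ⟨β, β′⟩, where β′ is another such vector with sign ε′. -/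
/-!
On a reduced word `w` of length `n + m + 1` the coefficient of `β_{n,m}` is `c (w n)`, where
`c x` is the coefficient of `β` at the letter `x` and `w n` is the `n`-th letter of `w`. Hence
`⟨β_{n,m}, β'_{n',m'}⟩` is the sum over reduced words of `c (w n) * conj (c' (w n'))`. A letter
outside the segment between the two positions can be summed out, contributing a factor `2N - 1`
(the number of letters that may stand next to a given one). The segment shrinks by summing out
its first letter: `c` summed over all letters except `x⁻¹` is `-c x⁻¹ = -ε c x`, as `∑ c = 0`.
Finally, inverting every letter multiplies `⟨β, β'⟩` by `ε ε'`, so it vanishes unless `ε = ε'`.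
-/

open Finset

theorem List.getD_tail {β : Type*} (l : List β) (n : ℕ) (d : β) :
    l.tail.getD n d = l.getD (n + 1) d := by
  cases l <;> simp

theorem List.getD_dropLast {β : Type*} {l : List β} {n : ℕ} (h : n + 1 < l.length) (d : β) :
    l.dropLast.getD n d = l.getD n d := by
  rw [getD_eq_getElem _ _ (by rw [length_dropLast]; omega), getD_eq_getElem _ _ (by omega),
    getElem_dropLast]

namespace FreeGroup

variable {α R : Type*}

theorem isReduced_reverse {L : List (α × Bool)} : IsReduced L.reverse ↔ IsReduced L := by
  simp only [IsReduced, List.isChain_reverse, eq_comm]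

section ReducedWords

variable [Fintype α]

variable (α) in
open scoped Classical in
noncomputable def reducedWords (k : ℕ) : Finset (List (α × Bool)) :=
  {l ∈ univ.image (List.Vector.toList : List.Vector (α × Bool) k → _) | IsReduced l}

theorem mem_reducedWords {k : ℕ} {l : List (α × Bool)} :
    l ∈ reducedWords α k ↔ l.length = k ∧ IsReduced l := by
  simp only [reducedWords, mem_filter, mem_image, mem_univ, true_and]
  exact and_congr_left fun _ => ⟨fun ⟨v, hv⟩ => hv ▸ v.2, fun h => ⟨⟨l, h⟩, rfl⟩⟩

theorem reducedWords_zero : reducedWords α 0 = {[]} := by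
  ext l
  simp only [mem_reducedWords, List.length_eq_zero_iff, mem_singleton, and_iff_left_iff_imp]
  rintro rfl
  exact IsReduced.nil

open scoped Classical in
theorem sum_reducedWords_succ [AddCommMonoid R] (F : List (α × Bool) → R) (k : ℕ) :
    ∑ l ∈ reducedWords α (k + 1), F l =
      ∑ u ∈ reducedWords α k, ∑ x : α × Bool with IsReduced (x :: u), F (x :: u) := by
  have himage : reducedWords α (k + 1) =
      {p ∈ reducedWords α k ×ˢ (univ : Finset (α × Bool)) | IsReduced (p.2 :: p.1)}.image
        fun p => p.2 :: p.1 := by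
    ext l
    rcases l with _ | ⟨x, u⟩
    · simp [mem_reducedWords]
    · simp only [mem_reducedWords, mem_image, mem_filter, mem_product, mem_univ, and_true]
      constructor
      · rintro ⟨hlen, hred⟩
        refine ⟨(u, x), ⟨⟨by simpa using hlen, ?_⟩, hred⟩, rfl⟩
        exact hred.infix (List.suffix_cons x u).isInfix
      · rintro ⟨⟨u', x'⟩, ⟨⟨hlen, -⟩, hred⟩, heq⟩
        obtain ⟨rfl, rfl⟩ := List.cons_eq_cons.1 heq
        exact ⟨by simp [hlen], hred⟩
  rw [himage, sum_image fun p _ q _ h => Prod.ext_iff.2 (List.cons_eq_cons.1 h).symm,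
    sum_filter, sum_product]
  exact sum_congr rfl fun u _ => (sum_filter _ _).symm

theorem sum_reducedWords_one [AddCommMonoid R] (F : List (α × Bool) → R) :
    ∑ l ∈ reducedWords α 1, F l = ∑ x, F [x] := by
  classical
  rw [sum_reducedWords_succ, reducedWords_zero, sum_singleton]
  exact sum_congr (filter_true_of_mem fun x _ => IsReduced.singleton) fun _ _ => rfl

open scoped Classical in
theorem sum_filter_isReduced_cons [AddCommGroup R] (c : α × Bool → R) {b : α × Bool}
    {L : List (α × Bool)} (h : IsReduced (b :: L)) :
    ∑ x : α × Bool with IsReduced (x :: b :: L), c x = ∑ x, c x - c (b.1, !b.2) := by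
  have hfilter :
      {x ∈ (univ : Finset (α × Bool)) | IsReduced (x :: b :: L)} = univ.erase (b.1, !b.2) := by
    ext ⟨a, s⟩
    obtain ⟨b, t⟩ := b
    cases s <;> cases t <;> simp [isReduced_cons_cons, h]
  rw [hfilter, sum_erase_eq_sub (mem_univ _)]

theorem sum_reducedWords_reverse [AddCommMonoid R] (F : List (α × Bool) → R) (k : ℕ) :
    ∑ l ∈ reducedWords α k, F l.reverse = ∑ l ∈ reducedWords α k, F l :=
  sum_nbij' List.reverse List.reverse
    (fun l hl => by simpa [mem_reducedWords, isReduced_reverse] using hl)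
    (fun l hl => by simpa [mem_reducedWords, isReduced_reverse] using hl)
    (fun l _ => List.reverse_reverse l) (fun l _ => List.reverse_reverse l) fun _ _ => rfl

section CommRing

variable [CommRing R]

theorem sum_reducedWords_tail (F : List (α × Bool) → R) (k : ℕ) :
    ∑ l ∈ reducedWords α (k + 2), F l.tail =
      (2 * Fintype.card α - 1) * ∑ u ∈ reducedWords α (k + 1), F u := by
  rw [sum_reducedWords_succ, mul_sum]
  refine sum_congr rfl fun u hu => ?_
  obtain ⟨hlen, hred⟩ := mem_reducedWords.1 hu
  obtain ⟨b, L, rfl⟩ := List.exists_cons_of_length_eq_add_one hlen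
  simp only [List.tail_cons]
  rw [sum_filter_isReduced_cons (fun _ => F (b :: L)) hred]
  simp only [sum_const, card_univ, Fintype.card_prod, Fintype.card_bool, nsmul_eq_mul]
  push_cast
  ring

theorem sum_reducedWords_dropLast (F : List (α × Bool) → R) (k : ℕ) :
    ∑ l ∈ reducedWords α (k + 2), F l.dropLast =
      (2 * Fintype.card α - 1) * ∑ u ∈ reducedWords α (k + 1), F u := by
  rw [← sum_reducedWords_reverse]
  simp only [List.dropLast_reverse]
  rw [sum_reducedWords_tail (fun u => F u.reverse), sum_reducedWords_reverse]

variable {f : α × Bool → R} {e : R}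

theorem sum_reducedWords_head_mul (hf₀ : ∑ x, f x = 0) (hf : ∀ x, f (x.1, !x.2) = e * f x)
    (G : List (α × Bool) → R) (x₀ : α × Bool) (k : ℕ) :
    ∑ l ∈ reducedWords α (k + 2), f (l.getD 0 x₀) * G l.tail =
      -e * ∑ u ∈ reducedWords α (k + 1), f (u.getD 0 x₀) * G u := by
  rw [sum_reducedWords_succ, mul_sum]
  refine sum_congr rfl fun u hu => ?_
  obtain ⟨hlen, hred⟩ := mem_reducedWords.1 hu
  obtain ⟨b, L, rfl⟩ := List.exists_cons_of_length_eq_add_one hlen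
  simp only [List.getD_cons_zero, List.tail_cons]
  rw [← sum_mul, sum_filter_isReduced_cons f hred, hf₀, hf]
  ring

theorem sum_reducedWords_getD_zero_mul_getD (hf₀ : ∑ x, f x = 0)
    (hf : ∀ x, f (x.1, !x.2) = e * f x) (g : α × Bool → R) (x₀ : α × Bool) (d : ℕ) :
    ∑ l ∈ reducedWords α (d + 1), f (l.getD 0 x₀) * g (l.getD d x₀) =
      (-e) ^ d * ∑ x, f x * g x := by
  induction d with
  | zero => simp [sum_reducedWords_one]
  | succ d ih =>
    simp_rw [← List.getD_tail _ d]
    rw [sum_reducedWords_head_mul hf₀ hf (fun u => g (u.getD d x₀)), ih]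
    ring

theorem sum_reducedWords_getD_mul_getD (hf₀ : ∑ x, f x = 0)
    (hf : ∀ x, f (x.1, !x.2) = e * f x) (g : α × Bool → R) (x₀ : α × Bool) (a d b : ℕ) :
    ∑ l ∈ reducedWords α (a + d + 1 + b), f (l.getD a x₀) * g (l.getD (a + d) x₀) =
      (2 * Fintype.card α - 1) ^ (a + b) * (-e) ^ d * ∑ x, f x * g x := by
  induction a with
  | succ a ih =>
    rw [show a + 1 + d + 1 + b = a + d + b + 2 by omega, show a + 1 + d = a + d + 1 by omega]
    simp_rw [← List.getD_tail]
    rw [sum_reducedWords_tail (fun u => f (u.getD a x₀) * g (u.getD (a + d) x₀)),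
      show a + d + b + 1 = a + d + 1 + b by omega, ih]
    ring
  | zero =>
    induction b with
    | zero => simpa using sum_reducedWords_getD_zero_mul_getD hf₀ hf g x₀ d
    | succ b ih =>
      calc ∑ l ∈ reducedWords α (0 + d + 1 + (b + 1)), f (l.getD 0 x₀) * g (l.getD (0 + d) x₀)
          = ∑ l ∈ reducedWords α (d + b + 2),
              f (l.dropLast.getD 0 x₀) * g (l.dropLast.getD (0 + d) x₀) := by
            refine sum_congr (by rw [show 0 + d + 1 + (b + 1) = d + b + 2 by omega]) fun l hl => ?_
            have hlen := (mem_reducedWords.1 hl).1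
            rw [List.getD_dropLast (by omega), List.getD_dropLast (by omega)]
        _ = _ := by
            rw [sum_reducedWords_dropLast (fun u => f (u.getD 0 x₀) * g (u.getD (0 + d) x₀)),
              show d + b + 1 = 0 + d + 1 + b by omega, ih]
            ring

end CommRing

theorem pow_add_mul_zpow_neg [CommGroupWithZero R] {K u : R} (hK : K ≠ 0) (hu : u * u = 1)
    (p d : ℕ) : K ^ (p + d) * (u * K) ^ (-(d : ℤ)) = K ^ p * u ^ d := by
  have hud : (u ^ d)⁻¹ = u ^ d := inv_eq_of_mul_eq_one_right (by rw [← mul_pow, hu, one_pow])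
  rw [zpow_neg, zpow_natCast, mul_pow, mul_inv, hud, pow_add]
  field_simp

theorem sum_reducedWords_getD_mul_getD_eq [Field R] [CharZero R] {f : α × Bool → R} {e : R}
    (hf₀ : ∑ x, f x = 0) (hf : ∀ x, f (x.1, !x.2) = e * f x) (he : e * e = 1)
    (g : α × Bool → R) (x₀ : α × Bool) {i j s t : ℕ} (hij : i + s = j + t) :
    ∑ l ∈ reducedWords α (i + s + 1), f (l.getD i x₀) * g (l.getD j x₀) =
      (2 * Fintype.card α - 1) ^ (i + s) * (-e * (2 * Fintype.card α - 1)) ^ (-|(i : ℤ) - j|) *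
        ∑ x, f x * g x := by
  have hK : (2 * Fintype.card α - 1 : R) ≠ 0 := by
    rw [sub_ne_zero]
    exact_mod_cast (by omega : 2 * Fintype.card α ≠ 1)
  have he' : -e * -e = 1 := by rw [neg_mul_neg, he]
  rcases le_total i j with h | h
  · obtain ⟨d, rfl⟩ := Nat.exists_eq_add_of_le h
    obtain rfl : s = d + t := by omega
    rw [show |(i : ℤ) - ↑(i + d)| = d by push_cast; rw [abs_sub_comm]; simp,
      show i + (d + t) = i + t + d by omega, pow_add_mul_zpow_neg hK he',
      show i + t + d + 1 = i + d + 1 + t by omega, sum_reducedWords_getD_mul_getD hf₀ hf]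
  · obtain ⟨d, rfl⟩ := Nat.exists_eq_add_of_le h
    obtain rfl : t = d + s := by omega
    rw [show |↑(j + d) - (j : ℤ)| = d by push_cast; simp,
      show j + d + s = j + s + d by omega, pow_add_mul_zpow_neg hK he',
      ← sum_reducedWords_reverse]
    calc ∑ l ∈ reducedWords α (j + s + d + 1),
            f (l.reverse.getD (j + d) x₀) * g (l.reverse.getD j x₀)
        = ∑ l ∈ reducedWords α (s + d + 1 + j), f (l.getD s x₀) * g (l.getD (s + d) x₀) := by
          refine sum_congr (by rw [show j + s + d + 1 = s + d + 1 + j by omega]) fun l hl => ?_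
          have hlen := (mem_reducedWords.1 hl).1
          rw [List.getD_reverse _ (by omega), List.getD_reverse _ (by omega),
            show l.length - 1 - (j + d) = s by omega, show l.length - 1 - j = s + d by omega]
      _ = _ := by rw [sum_reducedWords_getD_mul_getD hf₀ hf, add_comm s j]

theorem sum_mul_eq_zero_of_mul_eq_neg_one [CommRing R] [IsAddTorsionFree R]
    {f g : α × Bool → R} {e e' : R} (hf : ∀ x, f (x.1, !x.2) = e * f x)
    (hg : ∀ x, g (x.1, !x.2) = e' * g x) (he : e * e' = -1) : ∑ x, f x * g x = 0 := by
  have hflip : ∑ x, f x * g x = ∑ x : α × Bool, f (x.1, !x.2) * g (x.1, !x.2) :=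
    (Fintype.sum_equiv ((Equiv.refl α).prodCongr Equiv.boolNot)
      (fun x => f (x.1, !x.2) * g (x.1, !x.2)) _ fun _ => rfl).symm
  simp only [hf, hg, mul_mul_mul_comm, he, neg_one_mul, sum_neg_distrib] at hflip
  exact self_eq_neg.1 hflip

end ReducedWords

section GroupAlgebra

variable [DecidableEq α] {k : Type*} [Semiring k]

theorem toWord_mk_of_isReduced {L : List (α × Bool)} (h : IsReduced L) : (mk L).toWord = L := by
  rw [toWord_mk, h.reduce_eq]

theorem norm_le_of_mem_support_mul {f g : MonoidAlgebra k (FreeGroup α)} {r s : ℕ}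
    (hf : ∀ x ∈ f.coeff.support, norm x ≤ r) (hg : ∀ y ∈ g.coeff.support, norm y ≤ s) :
    ∀ w ∈ (f * g).coeff.support, norm w ≤ r + s := by
  intro w hw
  obtain ⟨x, hx, y, hy, rfl⟩ := mem_mul.1 (MonoidAlgebra.support_coeff_mul_subset f g hw)
  exact (norm_mul_le x y).trans (add_le_add (hf x hx) (hg y hy))

theorem coeff_mul_mk_append {f g : MonoidAlgebra k (FreeGroup α)} {l₁ l₂ : List (α × Bool)}
    (hf : ∀ x ∈ f.coeff.support, norm x ≤ l₁.length)
    (hg : ∀ y ∈ g.coeff.support, norm y ≤ l₂.length) (h : IsReduced (l₁ ++ l₂)) :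
    (f * g).coeff (mk (l₁ ++ l₂)) = f.coeff (mk l₁) * g.coeff (mk l₂) := by
  have hsplit : ∀ x ∈ f.coeff.support, ∀ y ∈ g.coeff.support,
      x * y = mk (l₁ ++ l₂) → x = mk l₁ ∧ y = mk l₂ := by
    intro x hx y hy hxy
    have hsub := toWord_mul_sublist x y
    rw [hxy, toWord_mk_of_isReduced h] at hsub
    have hx' : x.toWord.length ≤ l₁.length := hf x hx
    have hy' : y.toWord.length ≤ l₂.length := hg y hy
    have hlen := hsub.length_le
    simp only [List.length_append] at hlen
    obtain ⟨h₁, h₂⟩ := List.append_inj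
      (hsub.eq_of_length (by simp only [List.length_append]; omega)).symm (by omega)
    exact ⟨by rw [← h₁, mk_toWord], by rw [← h₂, mk_toWord]⟩
  rw [MonoidAlgebra.coeff_mul, Finsupp.sum_eq_single (mk l₁), Finsupp.sum_eq_single (mk l₂),
    if_pos mul_mk]
  · intro y hy hne
    by_cases hx : f.coeff (mk l₁) = 0
    · simp [hx]
    · exact if_neg fun hxy => hne (hsplit _ (Finsupp.mem_support_iff.2 hx) _
        (Finsupp.mem_support_iff.2 hy) hxy).2
  · simp
  · intro x hx hne
    refine sum_eq_zero fun y hy => if_neg fun hxy => hne ?_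
    exact (hsplit _ (Finsupp.mem_support_iff.2 hx) _ hy hxy).1
  · simp

theorem sum_coeff_mul_eq_sum_reducedWords [Fintype α] {F : MonoidAlgebra k (FreeGroup α)} {L : ℕ}
    (hF : ∀ w, w.toWord.length ≠ L → F.coeff w = 0) (φ : FreeGroup α → k) :
    (F.coeff.sum fun w a => a * φ w) = ∑ l ∈ reducedWords α L, F.coeff (mk l) * φ (mk l) := by
  have hsupp : F.coeff.support ⊆ (reducedWords α L).image mk := fun w hw => by
    have hlen : w.toWord.length = L := by
      by_contra hne
      exact Finsupp.mem_support_iff.1 hw (hF w hne)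
    exact mem_image.2 ⟨w.toWord, mem_reducedWords.2 ⟨hlen, isReduced_toWord⟩, mk_toWord⟩
  rw [Finsupp.sum_of_support_subset F.coeff hsupp (fun w a => a * φ w) fun w _ => zero_mul _,
    sum_image]
  intro l hl l' hl' heq
  rw [← toWord_mk_of_isReduced (mem_reducedWords.1 hl).2, heq,
    toWord_mk_of_isReduced (mem_reducedWords.1 hl').2]

theorem sum_coeff_mul_eq_sum_singleton [Fintype α] {F : MonoidAlgebra k (FreeGroup α)}
    (hF : ∀ w, w.toWord.length ≠ 1 → F.coeff w = 0) (φ : FreeGroup α → k) :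
    (F.coeff.sum fun w a => a * φ w) = ∑ x, F.coeff (mk [x]) * φ (mk [x]) := by
  rw [sum_coeff_mul_eq_sum_reducedWords hF, sum_reducedWords_one]

omit [DecidableEq α] in
theorem coeff_mk_flip {F : MonoidAlgebra k (FreeGroup α)} {e : k}
    (hF : ∀ w, F.coeff w = e * F.coeff w⁻¹) (x : α × Bool) :
    F.coeff (mk [(x.1, !x.2)]) = e * F.coeff (mk [x]) := by
  rw [hF, inv_mk]
  simp [invRev]

variable {χ : ℕ → MonoidAlgebra k (FreeGroup α)} {b : MonoidAlgebra k (FreeGroup α)}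

theorem coeff_mul_mul_mk_append_cons
    (hχ : ∀ n w, (χ n).coeff w = if w.toWord.length = n then 1 else 0)
    (hb : ∀ w, w.toWord.length ≠ 1 → b.coeff w = 0) {l₁ l₂ : List (α × Bool)} {x : α × Bool}
    (h : IsReduced (l₁ ++ x :: l₂)) :
    (χ l₁.length * b * χ l₂.length).coeff (mk (l₁ ++ x :: l₂)) = b.coeff (mk [x]) := by
  have hχ_supp (n : ℕ) : ∀ w ∈ (χ n).coeff.support, norm w ≤ n := fun w hw => by
    by_contra hne
    exact Finsupp.mem_support_iff.1 hw (by rw [hχ, if_neg (by unfold norm at hne; omega)])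
  have hb_supp : ∀ w ∈ b.coeff.support, norm w ≤ [x].length := fun w hw => by
    by_contra hne
    exact Finsupp.mem_support_iff.1 hw (hb w (by unfold norm at hne; rw [List.length_singleton] at hne; omega))
  have hχ_mk {l : List (α × Bool)} (hl : IsReduced l) : (χ l.length).coeff (mk l) = 1 := by
    rw [hχ, toWord_mk_of_isReduced hl, if_pos rfl]
  rw [← List.singleton_append, ← List.append_assoc] at h ⊢
  rw [coeff_mul_mk_append (by simpa using norm_le_of_mem_support_mul (hχ_supp _) hb_supp)
      (hχ_supp _) h,
    coeff_mul_mk_append (hχ_supp _) hb_supp (h.infix (List.prefix_append _ _).isInfix),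
    hχ_mk (h.infix (List.prefix_append _ _).isInfix |>.infix (List.prefix_append _ _).isInfix),
    hχ_mk (h.infix (List.suffix_append _ _).isInfix), one_mul, mul_one]

theorem coeff_mul_mul_mk_of_isReduced
    (hχ : ∀ n w, (χ n).coeff w = if w.toWord.length = n then 1 else 0)
    (hb : ∀ w, w.toWord.length ≠ 1 → b.coeff w = 0) {l : List (α × Bool)} (hl : IsReduced l)
    {r s : ℕ} (hlen : l.length = r + s + 1) (x₀ : α × Bool) :
    (χ r * b * χ s).coeff (mk l) = b.coeff (mk [l.getD r x₀]) := by
  have hr : r < l.length := by omega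
  have hsplit : l = l.take r ++ l.getD r x₀ :: l.drop (r + 1) := by
    rw [List.getD_eq_getElem _ _ hr, ← List.drop_eq_getElem_cons, List.take_append_drop]
  have h := coeff_mul_mul_mk_append_cons hχ hb (hsplit ▸ hl)
  rwa [← hsplit, List.length_take, List.length_drop, min_eq_left hr.le,
    show l.length - (r + 1) = s by omega] at h

theorem coeff_proj_mul_mul_mk
    {q : ℕ → MonoidAlgebra k (FreeGroup α) → MonoidAlgebra k (FreeGroup α)}
    (hq : ∀ L f w, (q L f).coeff w = if w.toWord.length = L then f.coeff w else 0)
    (hχ : ∀ n w, (χ n).coeff w = if w.toWord.length = n then 1 else 0)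
    (hb : ∀ w, w.toWord.length ≠ 1 → b.coeff w = 0) {l : List (α × Bool)} (hl : IsReduced l)
    (r s : ℕ) (x₀ : α × Bool) :
    (q (r + s + 1) (χ r * b * χ s)).coeff (mk l) =
      if l.length = r + s + 1 then b.coeff (mk [l.getD r x₀]) else 0 := by
  rw [hq, toWord_mk_of_isReduced hl]
  split_ifs with hlen
  · exact coeff_mul_mul_mk_of_isReduced hχ hb hl hlen x₀
  · rfl

end GroupAlgebra

end FreeGroup

open FreeGroup ComplexConjugate in
theorem stmt_12_general (N : ℕ) (hN : 2 ≤ N)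
    (chi : ℕ → MonoidAlgebra ℂ (FreeGroup (Fin N)))
    (hchi : ∀ n, ∀ w : FreeGroup (Fin N),
      (chi n).coeff w = if (FreeGroup.toWord w).length = n then 1 else 0)
    (q : ℕ → MonoidAlgebra ℂ (FreeGroup (Fin N)) → MonoidAlgebra ℂ (FreeGroup (Fin N)))
    (hq : ∀ l f (w : FreeGroup (Fin N)),
      (q l f).coeff w = if (FreeGroup.toWord w).length = l then f.coeff w else 0)
    (ε ε' : ℝ) (hε : ε = 1 ∨ ε = -1) (hε' : ε' = 1 ∨ ε' = -1)
    (β β' : MonoidAlgebra ℂ (FreeGroup (Fin N)))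
    (hβlen : ∀ w : FreeGroup (Fin N), (FreeGroup.toWord w).length ≠ 1 → β.coeff w = 0)
    (hβ'len : ∀ w : FreeGroup (Fin N), (FreeGroup.toWord w).length ≠ 1 → β'.coeff w = 0)
    (hβsym : ∀ w : FreeGroup (Fin N), β.coeff w = (ε : ℂ) * β.coeff w⁻¹)
    (hβ'sym : ∀ w : FreeGroup (Fin N), β'.coeff w = (ε' : ℂ) * β'.coeff w⁻¹)
    (hβorth : (β.coeff.sum fun w a => a * (starRingEnd ℂ) ((chi 1).coeff w)) = 0)
    (B B' : ℤ → ℤ → MonoidAlgebra ℂ (FreeGroup (Fin N)))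
    (hB : ∀ r s : ℕ, B r s = q (r + s + 1) (chi r * β * chi s))
    (hB' : ∀ r s : ℕ, B' r s = q (r + s + 1) (chi r * β' * chi s))
    (n m n' m' : ℕ) :
    ((B n m).coeff.sum fun w a => a * (starRingEnd ℂ) ((B' n' m').coeff w)) =
      (if ε = ε' then 1 else 0) * (if n + m = n' + m' then 1 else 0) *
        (2 * N - 1 : ℂ) ^ (n + m) *
        ((-(ε : ℂ) * (2 * N - 1)) ^ (-|(n : ℤ) - (n' : ℤ)|)) *
        (β.coeff.sum fun w a => a * (starRingEnd ℂ) (β'.coeff w)) := by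
  -- only a default for `List.getD`, at indices that are always in range
  let x₀ : Fin N × Bool := (⟨0, by omega⟩, true)
  have hβ₀ : ∑ x, β.coeff (mk [x]) = 0 := by
    rw [sum_coeff_mul_eq_sum_singleton hβlen] at hβorth
    simpa [hchi, toWord_mk_of_isReduced] using hβorth
  have hβ'conj (x : Fin N × Bool) :
      conj (β'.coeff (mk [(x.1, !x.2)])) = ε' * conj (β'.coeff (mk [x])) := by
    rw [coeff_mk_flip hβ'sym, _root_.map_mul, Complex.conj_ofReal]
  have hsign : (ε : ℂ) * ε = 1 ∧ (ε ≠ ε' → (ε : ℂ) * ε' = -1) := by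
    rcases hε with rfl | rfl <;> rcases hε' with rfl | rfl <;> norm_num
  have hinner : ∑ x, β.coeff (mk [x]) * conj (β'.coeff (mk [x])) =
      (if ε = ε' then 1 else 0) * ∑ x, β.coeff (mk [x]) * conj (β'.coeff (mk [x])) := by
    split_ifs with hεε'
    · rw [one_mul]
    · rw [zero_mul, sum_mul_eq_zero_of_mul_eq_neg_one (coeff_mk_flip hβsym) hβ'conj
        (hsign.2 hεε')]
  rw [sum_coeff_mul_eq_sum_reducedWords (L := n + m + 1) fun w hw => by rw [hB, hq, if_neg hw],
    sum_coeff_mul_eq_sum_singleton hβlen]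
  have hterm : ∀ l ∈ reducedWords (Fin N) (n + m + 1),
      (B n m).coeff (mk l) * conj ((B' n' m').coeff (mk l)) = β.coeff (mk [l.getD n x₀]) *
        conj (if n + m = n' + m' then β'.coeff (mk [l.getD n' x₀]) else 0) := fun l hl => by
    obtain ⟨hlen, hred⟩ := mem_reducedWords.1 hl
    rw [hB, hB', coeff_proj_mul_mul_mk hq hchi hβlen hred _ _ x₀,
      coeff_proj_mul_mul_mk hq hchi hβ'len hred _ _ x₀, if_pos hlen, hlen]
    simp only [Nat.add_right_cancel_iff]
  rw [sum_congr rfl hterm]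
  by_cases hnm : n + m = n' + m'
  · simp only [if_pos hnm]
    rw [sum_reducedWords_getD_mul_getD_eq hβ₀ (coeff_mk_flip hβsym) hsign.1
      (fun x => conj (β'.coeff (mk [x]))) x₀ hnm, Fintype.card_fin]
    conv_lhs => rw [hinner]
    ring
  · simp [hnm]

/-- Rădulescu's inner product formula: for `β, β'` of length one with symmetry signs
`ε, ε'` and orthogonal to `χ₁`, with `β_{r,s} = q_{r+s+1}(χ_r β χ_s)`,
`⟨β_{n,m}, β'_{n',m'}⟩ = δ_{ε,ε'} δ_{n+m,n'+m'} (2N-1)^{n+m} (-ε(2N-1))^{-|n-n'|} ⟨β,β'⟩`. -/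
theorem stmt_12 (N : ℕ) (hN : 2 ≤ N)
    (chi : ℕ → MonoidAlgebra ℂ (FreeGroup (Fin N)))
    (hchi : ∀ n, ∀ w : FreeGroup (Fin N),
      (chi n).coeff w = if (FreeGroup.toWord w).length = n then 1 else 0)
    (q : ℕ → MonoidAlgebra ℂ (FreeGroup (Fin N)) → MonoidAlgebra ℂ (FreeGroup (Fin N)))
    (hq : ∀ l f (w : FreeGroup (Fin N)),
      (q l f).coeff w = if (FreeGroup.toWord w).length = l then f.coeff w else 0)
    (ε ε' : ℝ) (hε : ε = 1 ∨ ε = -1) (hε' : ε' = 1 ∨ ε' = -1)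
    (β β' : MonoidAlgebra ℂ (FreeGroup (Fin N)))
    (hβlen : ∀ w : FreeGroup (Fin N), (FreeGroup.toWord w).length ≠ 1 → β.coeff w = 0)
    (hβ'len : ∀ w : FreeGroup (Fin N), (FreeGroup.toWord w).length ≠ 1 → β'.coeff w = 0)
    (hβsym : ∀ w : FreeGroup (Fin N), β.coeff w = (ε : ℂ) * β.coeff w⁻¹)
    (hβ'sym : ∀ w : FreeGroup (Fin N), β'.coeff w = (ε' : ℂ) * β'.coeff w⁻¹)
    (hβorth : (β.coeff.sum fun w a => a * (starRingEnd ℂ) ((chi 1).coeff w)) = 0)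
    (hβ'orth : (β'.coeff.sum fun w a => a * (starRingEnd ℂ) ((chi 1).coeff w)) = 0)
    (B B' : ℤ → ℤ → MonoidAlgebra ℂ (FreeGroup (Fin N)))
    (hB : ∀ r s : ℕ, B r s = q (r + s + 1) (chi r * β * chi s))
    (hB' : ∀ r s : ℕ, B' r s = q (r + s + 1) (chi r * β' * chi s))
    (hB0 : ∀ r s : ℤ, r < 0 ∨ s < 0 → B r s = 0)
    (hB'0 : ∀ r s : ℤ, r < 0 ∨ s < 0 → B' r s = 0)
    (n m n' m' : ℕ) :
    ((B n m).coeff.sum fun w a => a * (starRingEnd ℂ) ((B' n' m').coeff w)) =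
      (if ε = ε' then 1 else 0) * (if n + m = n' + m' then 1 else 0) *
        (2 * N - 1 : ℂ) ^ (n + m) *
        ((-(ε : ℂ) * (2 * N - 1)) ^ (-|(n : ℤ) - (n' : ℤ)|)) *
        (β.coeff.sum fun w a => a * (starRingEnd ℂ) (β'.coeff w)) :=
  stmt_12_general N hN chi hchi q hq ε ε' hε hε' β β' hβlen hβ'len hβsym hβ'sym hβorth B B' hB hB' n
    m n' m'
end

section
/- With β ∈ M₀¹ ⊖ S₁ having symmetry sign ε ∈ {±1} as above, for n, m ≥ 0 the inner product ⟨χ_n β χ_m, β⟩ equals: (−ε)^{(n+m)/2}·ε·‖β‖₂² if n+m > 2 and |n−m| = 2; 2(−ε)ⁿ‖β‖₂² if n+m > 2 and n = m; −‖β‖₂² if n+m = 2 and (n,m) ≠ (1,1); −ε‖β‖₂² if (n,m) = (1,1); ‖β‖₂² if (n,m) = (0,0); and 0 otherwise. -/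
/-!
Write `Φₖ = ∑_{|v| = k} β(first letter of v) · v` (`weightedSphere β k`). Multiplying a
letter `b` into a word `u` either cancels the first letter of `u` (exactly when `b` is that
letter) or lengthens `u`, so `β χₘ = Φₘ₊₁ - Φₘ₋₁`, where the orthogonality `∑ β = 0` kills
the contribution of all the non-cancelling letters. Evaluating `χₙ Φₖ` at a letter `w` in the
same way leaves only the weight `Zₖ(w)` (`endWeight β k w`) of the words of length `k` that
end in `w`. Splitting off the last letter gives
`Zₖ₊₁(w) = ∑_{|v| = k} β(first letter of v) - Zₖ(w⁻¹)`, and that total is `∑_w Zₖ(w)`, which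
vanishes by induction. With `β(w⁻¹) = ε β(w)` this gives `Zₖ(w) = (-ε)^(k-1) β(w)`. Hence
`χₙ β χₘ` is a scalar multiple of `β` on letters, and the pairing with `β` sees only letters.
-/

namespace FreeGroup

variable {α : Type*} [DecidableEq α]

section Letters

variable {b v : FreeGroup α}

def firstLetter (v : FreeGroup α) : FreeGroup α := mk v.toWord.head?.toList

def lastLetter (v : FreeGroup α) : FreeGroup α := (firstLetter v⁻¹)⁻¹

theorem toWord_mk_singleton_mul (x : α × Bool) (v : FreeGroup α) :
    (mk [x] * v).toWord =
      if v.toWord.head? = some (x.1, !x.2) then v.toWord.tail else x :: v.toWord := by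
  conv_lhs => rw [← mk_toWord (x := v), mul_mk, toWord_mk, List.singleton_append,
    reduce.cons, reduce_toWord]
  rcases x with ⟨a, s⟩
  cases v.toWord with
  | nil => rfl
  | cons hd tl =>
    rcases hd with ⟨c, t⟩
    simp only [List.head?_cons, Option.some.injEq, Prod.mk.injEq, List.tail_cons]
    congr 1
    cases s <;> cases t <;> simp [eq_comm]

theorem exists_eq_mk_singleton (hb : b.norm = 1) : ∃ x, b = mk [x] ∧ b.toWord = [x] := by
  obtain ⟨x, hx⟩ := List.length_eq_one_iff.mp hb
  exact ⟨x, by rw [← hx, mk_toWord], hx⟩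

@[simp]
theorem firstLetter_one : firstLetter (1 : FreeGroup α) = 1 := rfl

theorem firstLetter_eq_self (hv : v.norm = 1) : firstLetter v = v := by
  obtain ⟨x, rfl, hx⟩ := exists_eq_mk_singleton hv
  simp [firstLetter, hx]

theorem lastLetter_eq_self (hv : v.norm = 1) : lastLetter v = v := by
  rw [lastLetter, firstLetter_eq_self (by rwa [norm_inv_eq]), inv_inv]

theorem norm_firstLetter (hv : v ≠ 1) : (firstLetter v).norm = 1 := by
  obtain ⟨hd, tl, h⟩ := List.exists_cons_of_ne_nil (mt toWord_eq_nil_iff.mp hv)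
  simp [firstLetter, h, norm, toWord_mk]

theorem norm_lastLetter (hv : v ≠ 1) : (lastLetter v).norm = 1 := by
  rw [lastLetter, norm_inv_eq, norm_firstLetter (inv_ne_one.mpr hv)]

theorem toWord_firstLetter_inv_mul (v : FreeGroup α) :
    ((firstLetter v)⁻¹ * v).toWord = v.toWord.tail := by
  cases h : v.toWord with
  | nil => simp [toWord_eq_nil_iff.mp h]
  | cons hd tl =>
    rw [firstLetter, h, List.head?_cons, Option.toList_some, inv_mk, invRev,
      List.map_singleton, List.reverse_singleton, toWord_mk_singleton_mul, h]
    simp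

theorem toWord_mul_of_inv_ne_firstLetter (hb : b.norm = 1) (h : b⁻¹ ≠ firstLetter v) :
    (b * v).toWord = b.toWord ++ v.toWord := by
  obtain ⟨x, rfl, hx⟩ := exists_eq_mk_singleton hb
  rw [toWord_mk_singleton_mul, if_neg, hx, List.singleton_append]
  intro hhead
  apply h
  rw [inv_mk, firstLetter, hhead]
  rfl

theorem toWord_mul_of_inv_ne_lastLetter (hb : b.norm = 1) (h : b⁻¹ ≠ lastLetter v) :
    (v * b).toWord = v.toWord ++ b.toWord := by
  have h' : (b⁻¹)⁻¹ ≠ firstLetter v⁻¹ := by rwa [inv_inv, ← inv_inj.ne]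
  rw [← inv_inv (v * b), mul_inv_rev, toWord_inv,
    toWord_mul_of_inv_ne_firstLetter (by rwa [norm_inv_eq]) h', invRev_append,
    ← toWord_inv, ← toWord_inv, inv_inv, inv_inv]

theorem firstLetter_eq_of_toWord_eq_append {u : FreeGroup α} {L : List (α × Bool)}
    (h : u.toWord = v.toWord ++ L) (hv : v ≠ 1) : firstLetter u = firstLetter v := by
  rw [firstLetter, firstLetter, h, List.head?_append_of_ne_nil _ (mt toWord_eq_nil_iff.mp hv)]

theorem firstLetter_mul_of_inv_ne_firstLetter (hb : b.norm = 1) (h : b⁻¹ ≠ firstLetter v) :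
    firstLetter (b * v) = b := by
  rw [firstLetter_eq_of_toWord_eq_append (toWord_mul_of_inv_ne_firstLetter hb h)
    (by rintro rfl; simp at hb), firstLetter_eq_self hb]

theorem firstLetter_mul_of_inv_ne_lastLetter (hb : b.norm = 1) (hv : v ≠ 1)
    (h : b⁻¹ ≠ lastLetter v) : firstLetter (v * b) = firstLetter v :=
  firstLetter_eq_of_toWord_eq_append (toWord_mul_of_inv_ne_lastLetter hb h) hv

theorem lastLetter_mul_of_inv_ne_lastLetter (hb : b.norm = 1) (h : b⁻¹ ≠ lastLetter v) :
    lastLetter (v * b) = b := by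
  have h' : (b⁻¹)⁻¹ ≠ firstLetter v⁻¹ := by rwa [inv_inv, ← inv_inj.ne]
  rw [lastLetter, mul_inv_rev,
    firstLetter_mul_of_inv_ne_firstLetter (by rwa [norm_inv_eq]) h', inv_inv]

theorem norm_inv_mul_of_norm_eq_one (hb : b.norm = 1) (u : FreeGroup α) :
    (b⁻¹ * u).norm = if firstLetter u = b then u.norm - 1 else u.norm + 1 := by
  split_ifs with h
  · rw [← h, norm, toWord_firstLetter_inv_mul, List.length_tail, norm]
  · rw [norm, toWord_mul_of_inv_ne_firstLetter (by rwa [norm_inv_eq]) (by rwa [inv_inv, ne_comm]),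
      List.length_append, ← norm, ← norm, norm_inv_eq, hb, add_comm]

theorem norm_mul_inv_of_norm_eq_one (hb : b.norm = 1) (v : FreeGroup α) :
    (v * b⁻¹).norm = if lastLetter v = b then v.norm - 1 else v.norm + 1 := by
  rw [← norm_inv_eq, mul_inv_rev, norm_inv_mul_of_norm_eq_one (by rwa [norm_inv_eq]), norm_inv_eq]
  simp only [lastLetter, inv_eq_iff_eq_inv]

end Letters

variable [Finite α]

noncomputable def sphere (k : ℕ) : Finset (FreeGroup α) :=
  ((List.finite_length_eq (α × Bool) k).preimage toWord_injective.injOn).toFinset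

@[simp]
theorem mem_sphere {k : ℕ} {v : FreeGroup α} : v ∈ sphere k ↔ v.norm = k := by
  simp [sphere, norm]

theorem sphere_zero : sphere 0 = ({1} : Finset (FreeGroup α)) := by
  ext v; simp

section SphereSums

open MonoidAlgebra

variable {R : Type*} [CommRing R]

variable (R) in
noncomputable def sphereSum (k : ℕ) : MonoidAlgebra R (FreeGroup α) :=
  ∑ v ∈ sphere k, single v 1

noncomputable def weightedSphere (β : MonoidAlgebra R (FreeGroup α)) (k : ℕ) :
    MonoidAlgebra R (FreeGroup α) :=
  ∑ v ∈ sphere k, single v (β.coeff (firstLetter v))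

noncomputable def endWeight (β : MonoidAlgebra R (FreeGroup α)) (k : ℕ) (w : FreeGroup α) : R :=
  ∑ v ∈ sphere k with lastLetter v = w, β.coeff (firstLetter v)

theorem coeff_sphereSum (k : ℕ) (w : FreeGroup α) :
    (sphereSum R k).coeff w = if w.norm = k then 1 else 0 := by
  simp [sphereSum, coeff_sum, Finsupp.single_apply]

theorem coeff_weightedSphere (β : MonoidAlgebra R (FreeGroup α)) (k : ℕ) (w : FreeGroup α) :
    (weightedSphere β k).coeff w = if w.norm = k then β.coeff (firstLetter w) else 0 := by
  simp [weightedSphere, coeff_sum, Finsupp.single_apply]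

theorem weightedSphere_zero {β : MonoidAlgebra R (FreeGroup α)} (hβ : β.coeff 1 = 0) :
    weightedSphere β 0 = 0 := by
  simp [weightedSphere, sphere_zero, hβ]

theorem support_subset_sphere_one {β : MonoidAlgebra R (FreeGroup α)}
    (hβ : ∀ w : FreeGroup α, w.norm ≠ 1 → β.coeff w = 0) : β.coeff.support ⊆ sphere 1 :=
  fun b hb ↦ mem_sphere.2 (by_contra fun h ↦ Finsupp.mem_support_iff.1 hb (hβ b h))

/-- For `m = 0` the truncated `m - 1` is `0`, which is harmless since `weightedSphere β 0 = 0`. -/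
theorem mul_sphereSum {β : MonoidAlgebra R (FreeGroup α)}
    (hβ : ∀ w : FreeGroup α, w.norm ≠ 1 → β.coeff w = 0) (hsum : ∑ b ∈ sphere 1, β.coeff b = 0)
    (m : ℕ) : β * sphereSum R m = weightedSphere β (m + 1) - weightedSphere β (m - 1) := by
  ext u
  have hterm : ∀ b ∈ sphere 1, β.coeff b * (sphereSum R m).coeff (b⁻¹ * u) =
      (if firstLetter u = b then
        β.coeff b * ((if u.norm - 1 = m then 1 else 0) - if u.norm + 1 = m then 1 else 0)
        else 0) + (if u.norm + 1 = m then 1 else 0) * β.coeff b := by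
    intro b hb
    rw [coeff_sphereSum, norm_inv_mul_of_norm_eq_one (mem_sphere.1 hb)]
    split_ifs <;> ring
  rw [coeff_mul_apply_left,
    Finsupp.sum_of_support_subset _ (support_subset_sphere_one hβ) _ (by simp),
    Finset.sum_congr rfl hterm, Finset.sum_add_distrib, Finset.sum_ite_eq, ← Finset.mul_sum, hsum,
    mul_zero, add_zero, coeff_sub, Finsupp.sub_apply, coeff_weightedSphere, coeff_weightedSphere]
  rcases eq_or_ne u 1 with rfl | hu
  · simp [hβ 1 (by simp)]
  · have hpos : u.norm ≠ 0 := mt norm_eq_zero.1 hu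
    rw [if_pos (mem_sphere.2 (norm_firstLetter hu))]
    split_ifs <;> first | (exfalso; omega) | ring

theorem endWeight_one (β : MonoidAlgebra R (FreeGroup α)) {w : FreeGroup α} (hw : w.norm = 1) :
    endWeight β 1 w = β.coeff w := by
  rw [endWeight, Finset.sum_filter, Finset.sum_congr rfl fun v hv ↦ by
    rw [lastLetter_eq_self (mem_sphere.1 hv), firstLetter_eq_self (mem_sphere.1 hv)],
    Finset.sum_ite_eq', if_pos (mem_sphere.2 hw)]

theorem sum_endWeight (β : MonoidAlgebra R (FreeGroup α)) {k : ℕ} (hk : k ≠ 0) :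
    ∑ w ∈ sphere 1, endWeight β k w = ∑ v ∈ sphere k, β.coeff (firstLetter v) :=
  Finset.sum_fiberwise_of_maps_to (fun v hv ↦
    mem_sphere.2 (norm_lastLetter (by rintro rfl; simp at hv; omega))) _

theorem endWeight_succ (β : MonoidAlgebra R (FreeGroup α)) {k : ℕ} (hk : k ≠ 0)
    {w : FreeGroup α} (hw : w.norm = 1) :
    endWeight β (k + 1) w = ∑ v ∈ sphere k, β.coeff (firstLetter v) - endWeight β k w⁻¹ := by
  rw [eq_sub_iff_add_eq, endWeight, endWeight,
    ← Finset.sum_filter_not_add_sum_filter (sphere k) (fun v ↦ lastLetter v = w⁻¹),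
    add_left_inj]
  symm
  refine Finset.sum_nbij' (· * w) (· * w⁻¹) ?_ ?_ (fun _ _ ↦ mul_inv_cancel_right _ _)
    (fun _ _ ↦ inv_mul_cancel_right _ _) ?_
  · intro u hu
    simp only [Finset.mem_filter, mem_sphere] at hu ⊢
    have hnorm := norm_mul_inv_of_norm_eq_one (b := w⁻¹) (by rwa [norm_inv_eq]) u
    rw [inv_inv, if_neg hu.2] at hnorm
    exact ⟨by omega, lastLetter_mul_of_inv_ne_lastLetter hw (Ne.symm hu.2)⟩
  · intro v hv
    simp only [Finset.mem_filter, mem_sphere] at hv ⊢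
    have hnorm := norm_mul_inv_of_norm_eq_one hw v
    rw [if_pos hv.2] at hnorm
    refine ⟨by omega, fun h ↦ ?_⟩
    have hback := norm_mul_inv_of_norm_eq_one (b := w⁻¹) (by rwa [norm_inv_eq]) (v * w⁻¹)
    rw [if_pos h, inv_inv, inv_mul_cancel_right] at hback
    omega
  · intro u hu
    simp only [Finset.mem_filter, mem_sphere] at hu
    rw [firstLetter_mul_of_inv_ne_lastLetter hw (by rintro rfl; simp at hu; omega)
      (Ne.symm hu.2)]

theorem sum_coeff_firstLetter_eq_zero {β : MonoidAlgebra R (FreeGroup α)}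
    (hsum : ∑ b ∈ sphere 1, β.coeff b = 0) {k : ℕ} (hk : k ≠ 0) {c : R}
    (hc : ∀ w ∈ sphere 1, endWeight β k w = c * β.coeff w) :
    ∑ v ∈ sphere k, β.coeff (firstLetter v) = 0 := by
  rw [← sum_endWeight β hk, Finset.sum_congr rfl hc, ← Finset.mul_sum, hsum, mul_zero]

theorem endWeight_eq {β : MonoidAlgebra R (FreeGroup α)} {ε : R}
    (hsum : ∑ b ∈ sphere 1, β.coeff b = 0) (hsym : ∀ w, β.coeff w = ε * β.coeff w⁻¹)
    {k : ℕ} (hk : k ≠ 0) {w : FreeGroup α} (hw : w.norm = 1) :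
    endWeight β k w = (-ε) ^ (k - 1) * β.coeff w := by
  obtain ⟨k, rfl⟩ := Nat.exists_eq_add_one_of_ne_zero hk
  rw [Nat.add_sub_cancel]
  clear hk
  induction k generalizing w with
  | zero => rw [endWeight_one β hw, pow_zero, one_mul]
  | succ k ih =>
    have ih' : ∀ w' ∈ sphere 1, endWeight β (k + 1) w' = (-ε) ^ k * β.coeff w' :=
      fun w' hw' ↦ ih (mem_sphere.1 hw')
    rw [endWeight_succ β k.succ_ne_zero hw, sum_coeff_firstLetter_eq_zero hsum k.succ_ne_zero ih',
      ih (by rwa [norm_inv_eq]), hsym w⁻¹, inv_inv, pow_succ]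
    ring

def sphereCoeff (ε : R) (n k : ℕ) : R :=
  if k = 0 then 0 else ((if n + 1 = k then 1 else 0) - if n = k + 1 then 1 else 0) * (-ε) ^ (k - 1)

theorem coeff_sphereSum_mul_weightedSphere {β : MonoidAlgebra R (FreeGroup α)} {ε : R}
    (hβ : ∀ w : FreeGroup α, w.norm ≠ 1 → β.coeff w = 0) (hsum : ∑ b ∈ sphere 1, β.coeff b = 0)
    (hsym : ∀ w, β.coeff w = ε * β.coeff w⁻¹) {w : FreeGroup α} (hw : w.norm = 1) (n k : ℕ) :
    (sphereSum R n * weightedSphere β k).coeff w = sphereCoeff ε n k * β.coeff w := by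
  rcases eq_or_ne k 0 with rfl | hk
  · rw [weightedSphere_zero (hβ 1 (by simp)), mul_zero, coeff_zero, Finsupp.zero_apply,
      sphereCoeff, if_pos rfl, zero_mul]
  have hterm : ∀ v ∈ sphere k,
      (sphereSum R n * single v (β.coeff (firstLetter v))).coeff w =
        (if lastLetter v = w then
          ((if n + 1 = k then 1 else 0) - if n = k + 1 then 1 else 0) * β.coeff (firstLetter v)
          else 0) + (if n = k + 1 then 1 else 0) * β.coeff (firstLetter v) := by
    intro v hv
    rw [coeff_mul_single_apply, coeff_sphereSum, ← norm_inv_eq, mul_inv_rev, inv_inv,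
      norm_mul_inv_of_norm_eq_one hw, mem_sphere.1 hv]
    split_ifs <;> first | (exfalso; omega) | ring
  rw [weightedSphere, Finset.mul_sum, coeff_sum, Finset.sum_apply', Finset.sum_congr rfl hterm,
    Finset.sum_add_distrib, ← Finset.sum_filter, ← Finset.mul_sum, ← Finset.mul_sum,
    ← endWeight, endWeight_eq hsum hsym hk hw,
    sum_coeff_firstLetter_eq_zero hsum hk fun w' hw' ↦ endWeight_eq hsum hsym hk (mem_sphere.1 hw'),
    mul_zero, add_zero, sphereCoeff, if_neg hk]
  ring

theorem coeff_sphereSum_mul_mul_sphereSum {β : MonoidAlgebra R (FreeGroup α)} {ε : R}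
    (hβ : ∀ w : FreeGroup α, w.norm ≠ 1 → β.coeff w = 0) (hsum : ∑ b ∈ sphere 1, β.coeff b = 0)
    (hsym : ∀ w, β.coeff w = ε * β.coeff w⁻¹) {w : FreeGroup α} (hw : w.norm = 1) (n m : ℕ) :
    (sphereSum R n * β * sphereSum R m).coeff w =
      (sphereCoeff ε n (m + 1) - sphereCoeff ε n (m - 1)) * β.coeff w := by
  rw [mul_assoc, mul_sphereSum hβ hsum, mul_sub, coeff_sub, Finsupp.sub_apply,
    coeff_sphereSum_mul_weightedSphere hβ hsum hsym hw,
    coeff_sphereSum_mul_weightedSphere hβ hsum hsym hw, sub_mul]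

theorem sphereCoeff_sub {ε : R} (hε : ε ^ 2 = 1) (n m : ℕ) :
    sphereCoeff ε n (m + 1) - sphereCoeff ε n (m - 1) =
      if (n, m) = (0, 0) then 1
        else if (n, m) = (1, 1) then -ε
        else if n + m = 2 then -1
        else if n + m > 2 ∧ n = m then 2 * (-ε) ^ n
        else if n + m > 2 ∧ |(n : ℤ) - (m : ℤ)| = 2 then (-ε) ^ ((n + m) / 2) * ε
        else 0 := by
  have hpow : ∀ j, (-ε) ^ (j + 2) = (-ε) ^ j := fun j ↦ by rw [pow_add, neg_sq, hε, mul_one]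
  have habs : |(n : ℤ) - (m : ℤ)| = 2 ↔ n = m + 2 ∨ m = n + 2 := by
    rw [abs_eq zero_le_two]; omega
  simp only [habs, Prod.mk.injEq]
  obtain h | h | h | ⟨h1, h2, h3⟩ :
      n = m ∨ n = m + 2 ∨ m = n + 2 ∨ (n ≠ m ∧ n ≠ m + 2 ∧ m ≠ n + 2) := by omega
  · subst n
    rcases m with _ | _ | m
    · simp [sphereCoeff]
    · simp [sphereCoeff]
    · simp (disch := omega) only [sphereCoeff, if_pos, if_neg, if_true, Nat.add_sub_cancel,
        and_true]
      rw [hpow]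
      ring
  · subst n
    rcases m with _ | m
    · simp [sphereCoeff]
    · simp (disch := omega) only [sphereCoeff, if_pos, if_neg, if_true, Nat.add_sub_cancel,
        sub_self, zero_mul, ite_self, and_true, true_or]
      rw [show (m + 1 + 2 + (m + 1)) / 2 = m + 2 by omega, hpow]
      ring
  · subst m
    rcases n with _ | n
    · simp [sphereCoeff]
    · simp (disch := omega) only [sphereCoeff, if_pos, if_neg, and_true, or_true]
      rw [show (n + 1 + (n + 1 + 2)) / 2 = n + 2 by omega, show n + 1 + 2 - 1 - 1 = n + 1 by omega,
        hpow]
      ring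
  · simp (disch := omega) only [sphereCoeff, if_neg, sub_self, zero_mul, ite_self]

end SphereSums

end FreeGroup

theorem Finsupp.sum_mul_eq_mul_sum_of_forall {ι R : Type*} [CommSemiring R] {f g : ι →₀ R}
    {h : ι → R} {c : R} (hfg : ∀ i, f i * h i = c * (g i * h i)) :
    (f.sum fun i a ↦ a * h i) = c * g.sum fun i a ↦ a * h i := by
  have hf : (Function.support fun i ↦ c * (g i * h i)) ⊆ f.support := fun i hi ↦
    Finsupp.mem_support_iff.2 (left_ne_zero_of_mul (by rwa [Function.mem_support, ← hfg] at hi))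
  have hg : (Function.support fun i ↦ c * (g i * h i)) ⊆ g.support := fun i hi ↦
    Finsupp.mem_support_iff.2 (left_ne_zero_of_mul (right_ne_zero_of_mul hi))
  rw [Finsupp.sum, Finsupp.sum, Finset.mul_sum, Finset.sum_congr rfl fun i _ ↦ hfg i,
    ← finsum_eq_sum_of_support_subset _ hf, finsum_eq_sum_of_support_subset _ hg]

theorem stmt_14_general (N : ℕ)
    (chi : ℕ → MonoidAlgebra ℂ (FreeGroup (Fin N)))
    (hchi : ∀ n, ∀ w : FreeGroup (Fin N),
      (chi n).coeff w = if (FreeGroup.toWord w).length = n then 1 else 0)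
    (ε : ℝ) (hε : ε = 1 ∨ ε = -1)
    (β : MonoidAlgebra ℂ (FreeGroup (Fin N)))
    (hβlen : ∀ w : FreeGroup (Fin N), (FreeGroup.toWord w).length ≠ 1 → β.coeff w = 0)
    (hβsym : ∀ w : FreeGroup (Fin N), β.coeff w = (ε : ℂ) * β.coeff w⁻¹)
    (hβorth : (β.coeff.sum fun w a => a * (starRingEnd ℂ) ((chi 1).coeff w)) = 0)
    (n m : ℕ) :
    ((chi n * β * chi m).coeff.sum fun w a => a * (starRingEnd ℂ) (β.coeff w)) =
      (if (n, m) = (0, 0) then 1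
        else if (n, m) = (1, 1) then -(ε : ℂ)
        else if n + m = 2 then -1
        else if n + m > 2 ∧ n = m then 2 * (-(ε : ℂ)) ^ n
        else if n + m > 2 ∧ |(n : ℤ) - (m : ℤ)| = 2 then (-(ε : ℂ)) ^ ((n + m) / 2) * (ε : ℂ)
        else 0) *
      (β.coeff.sum fun w a => a * (starRingEnd ℂ) (β.coeff w)) := by
  obtain rfl : chi = fun k ↦ FreeGroup.sphereSum ℂ k := funext fun k ↦
    MonoidAlgebra.ext <| Finsupp.ext fun w ↦ by rw [hchi, FreeGroup.coeff_sphereSum]; rfl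
  have hsum : ∑ b ∈ FreeGroup.sphere 1, β.coeff b = 0 := by
    rw [← hβorth,
      Finsupp.sum_of_support_subset _ (FreeGroup.support_subset_sphere_one hβlen) _ (by simp)]
    refine Finset.sum_congr rfl fun b hb ↦ ?_
    rw [FreeGroup.coeff_sphereSum, if_pos (FreeGroup.mem_sphere.1 hb), map_one, mul_one]
  have hε2 : (ε : ℂ) ^ 2 = 1 := by rcases hε with rfl | rfl <;> norm_num
  refine Finsupp.sum_mul_eq_mul_sum_of_forall fun w ↦ ?_
  by_cases hw : w.norm = 1
  · rw [FreeGroup.coeff_sphereSum_mul_mul_sphereSum hβlen hsum hβsym hw,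
      FreeGroup.sphereCoeff_sub hε2, mul_assoc]
  · rw [hβlen w hw]
    simp

/-- Lemma 2.2: the values of `⟨χ_n β χ_m, β⟩` for `β` of length one with symmetry
sign `ε` and orthogonal to `χ₁`. -/
theorem stmt_14 (N : ℕ) (hN : 2 ≤ N)
    (chi : ℕ → MonoidAlgebra ℂ (FreeGroup (Fin N)))
    (hchi : ∀ n, ∀ w : FreeGroup (Fin N),
      (chi n).coeff w = if (FreeGroup.toWord w).length = n then 1 else 0)
    (ε : ℝ) (hε : ε = 1 ∨ ε = -1)
    (β : MonoidAlgebra ℂ (FreeGroup (Fin N)))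
    (hβlen : ∀ w : FreeGroup (Fin N), (FreeGroup.toWord w).length ≠ 1 → β.coeff w = 0)
    (hβsym : ∀ w : FreeGroup (Fin N), β.coeff w = (ε : ℂ) * β.coeff w⁻¹)
    (hβorth : (β.coeff.sum fun w a => a * (starRingEnd ℂ) ((chi 1).coeff w)) = 0)
    (n m : ℕ) :
    ((chi n * β * chi m).coeff.sum fun w a => a * (starRingEnd ℂ) (β.coeff w)) =
      (if (n, m) = (0, 0) then 1
        else if (n, m) = (1, 1) then -(ε : ℂ)
        else if n + m = 2 then -1
        else if n + m > 2 ∧ n = m then 2 * (-(ε : ℂ)) ^ n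
        else if n + m > 2 ∧ |(n : ℤ) - (m : ℤ)| = 2 then (-(ε : ℂ)) ^ ((n + m) / 2) * (ε : ℂ)
        else 0) *
      (β.coeff.sum fun w a => a * (starRingEnd ℂ) (β.coeff w)) :=
  stmt_14_general N chi hchi ε hε β hβlen hβsym hβorth n m
end
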